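/- Let G = (V, E) be a graph with a linear order < on E. Then the Tutte polynomial, defined as T(G, x, y) = Σ_{F spanning forest of G} x^{i(F)} y^{e(F)}, equals the edge-subset sum Σ_{A ⊆ E} (x−1)^{k(G[A]) − k(G)} (y−1)^{|A| − |V| + k(G[A])}, where G[A] denotes the spanning subgraph (V, A) and k the number of connected components. -/

import Mathlib

open Finset

attribute [local instance] Classical.propDecidable

/-- A multigraph on vertex type `V` with edge index type `E` is given by a map
`ends : E → Sym2 V` (loops and parallel edges are allowed).  For an edge subset
`A ⊆ E`, `edgeGraph ends A` is the simple graph on `V` whose adjacency is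
witnessed by some edge of `A`; it determines the connected components of the
spanning subgraph `(V, A)`. -/
def edgeGraph {V E : Type} (ends : E → Sym2 V) (A : Finset E) : SimpleGraph V where
  Adj a b := a ≠ b ∧ ∃ e ∈ A, ends e = s(a, b)
  symm := by
    constructor
    rintro a b ⟨hab, e, he, hs⟩
    exact ⟨Ne.symm hab, e, he, by rw [hs, Sym2.eq_swap]⟩
  loopless := by constructor; rintro a ⟨h, -⟩; exact h rfl

/-- `kc ends A` is the number of connected components of the spanning subgraph `(V, A)`. -/
noncomputable def kc {V E : Type} (ends : E → Sym2 V) (A : Finset E) : ℕ :=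
  Nat.card (edgeGraph ends A).ConnectedComponent

/-- `(V, A)` is a spanning forest of `(V, E)`: it is a forest
(`|A| + k((V,A)) = |V|`, which rules out loops, parallel edges and cycles)
with as many connected components as the whole graph. -/
def IsSpanningForest {V E : Type} [Fintype V] [Fintype E] (ends : E → Sym2 V)
    (A : Finset E) : Prop :=
  A.card + kc ends A = Fintype.card V ∧ kc ends A = kc ends Finset.univ

/-- `F - e + f`. -/
def swapEdge {E : Type} [DecidableEq E] (A : Finset E) (e f : E) : Finset E :=
  insert f (A.erase e)

/-- `e` is internally active in the spanning forest `(V, A)`. -/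
def InternallyActive {V E : Type} [Fintype V] [Fintype E] [DecidableEq E] [LinearOrder E]
    (ends : E → Sym2 V) (A : Finset E) (e : E) : Prop :=
  e ∈ A ∧ ¬ ∃ f, f ∉ A ∧ e < f ∧ IsSpanningForest ends (swapEdge A e f)

/-- `f` is externally active in the spanning forest `(V, A)`. -/
def ExternallyActive {V E : Type} [Fintype V] [Fintype E] [DecidableEq E] [LinearOrder E]
    (ends : E → Sym2 V) (A : Finset E) (f : E) : Prop :=
  f ∉ A ∧ ¬ ∃ e, e ∈ A ∧ f < e ∧ IsSpanningForest ends (swapEdge A e f)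

/-- The set `E_i(F)` of internally active edges of the spanning forest `F = (V, A)`. -/
noncomputable def intAct {V E : Type} [Fintype V] [Fintype E] [DecidableEq E] [LinearOrder E]
    (ends : E → Sym2 V) (A : Finset E) : Finset E :=
  Finset.univ.filter (InternallyActive ends A)

/-- The set `E_e(F)` of externally active edges of the spanning forest `F = (V, A)`. -/
noncomputable def extAct {V E : Type} [Fintype V] [Fintype E] [DecidableEq E] [LinearOrder E]
    (ends : E → Sym2 V) (A : Finset E) : Finset E :=
  Finset.univ.filter (ExternallyActive ends A)

/-!
Crapo's partition of the Boolean lattice into intervals. Scanning the edges in the order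
"edges of `A` increasingly, then the remaining edges decreasingly", Kruskal's algorithm assigns to
every `A ⊆ E` a spanning forest `F(A)` such that `A ∩ F(A)` is a spanning forest of `(V, A)`;
hence `k(A) - k(E) = |F(A) \ A|` and `|A| - |V| + k(A) = |A \ F(A)|`. The edges of `F(A) \ A`
are internally and those of `A \ F(A)` externally active in `F(A)`. Conversely, if
`F \ A ⊆ E_i(F)` and `A \ F ⊆ E_e(F)`, then every edge scanned before an edge `e ∈ F` lies in
`F - e` or is spanned by `F - e`, so Kruskal keeps `e`, and `F(A) = F` by counting. The fibres of
`A ↦ F(A)` are therefore the intervals `[F \ E_i(F), F ∪ E_e(F)]`, and summing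
`(x - 1)^|F \ A| (y - 1)^|A \ F|` over such an interval gives `x^i(F) y^e(F)`.
-/

lemma Nat.card_eq_card_add_one_of_injOn_compl {α β : Type} [Finite α] {f : α → β}
    (hf : Function.Surjective f) {a b : α} (hab : a ≠ b) (hfab : f a = f b)
    (hinj : Set.InjOn f {b}ᶜ) : Nat.card α = Nat.card β + 1 := by
  have himage : f '' {b}ᶜ = Set.univ := by
    refine Set.eq_univ_of_forall fun y => ?_
    obtain ⟨x, rfl⟩ := hf y
    by_cases hx : x = b
    · exact ⟨a, hab, hx ▸ hfab⟩
    · exact ⟨x, hx, rfl⟩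
  rw [← Set.ncard_univ β, ← himage, hinj.ncard_image, ← Set.ncard_univ α,
    Set.compl_eq_univ_sdiff, Set.ncard_sdiff_singleton_add_one (Set.mem_univ b)]

lemma sum_pow_card_sdiff_mul_pow_card_sdiff {E R : Type} [Fintype E] [DecidableEq E]
    [CommSemiring R] {B I X : Finset E} (hI : I ⊆ B) (hX : Disjoint X B) (a b : R) :
    ∑ A ∈ (Finset.univ : Finset E).powerset.filter (fun A => B \ A ⊆ I ∧ A \ B ⊆ X),
        a ^ (B \ A).card * b ^ (A \ B).card =
      (a + 1) ^ I.card * (b + 1) ^ X.card := by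
  have hpow (s : Finset E) (c : R) : ∑ t ∈ s.powerset, c ^ t.card = (c + 1) ^ s.card := by
    simpa using Finset.sum_pow_mul_eq_add_pow c 1 s
  rw [← hpow, ← hpow, Finset.sum_mul_sum, ← Finset.sum_product']
  have hIB {e} (he : e ∈ I) : e ∈ B := hI he
  have hXB {e} (he : e ∈ X) : e ∉ B := Finset.disjoint_left.1 hX he
  refine Finset.sum_bij' (fun A _ => (B \ A, A \ B)) (fun p _ => B \ p.1 ∪ p.2)
    (fun A hA => ?maps_to) (fun p hp => ?inv_maps_to) (fun A _ => ?left_inv)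
    (fun p hp => ?right_inv) (fun _ _ => rfl)
  case maps_to => simpa using (Finset.mem_filter.1 hA).2
  case inv_maps_to =>
    simp only [Finset.mem_product, Finset.mem_powerset, Finset.subset_iff] at hp
    simp only [Finset.mem_filter, Finset.mem_powerset, Finset.subset_iff, Finset.mem_univ,
      Finset.mem_union, Finset.mem_sdiff]
    grind
  case left_inv =>
    ext e
    simp only [Finset.mem_union, Finset.mem_sdiff]
    tauto
  case right_inv =>
    simp only [Finset.mem_product, Finset.mem_powerset, Finset.subset_iff] at hp
    refine Prod.ext ?_ ?_ <;> ext e <;> simp only [Finset.mem_union, Finset.mem_sdiff] <;> grind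

namespace SimpleGraph

variable {V : Type} {G H : SimpleGraph V}

lemma Reachable.apply_eq_of_adj {β : Type} {f : V → β}
    (hf : ∀ ⦃a b⦄, G.Adj a b → f a = f b) {u v : V} (h : G.Reachable u v) : f u = f v := by
  rw [reachable_iff_reflTransGen] at h
  induction h with
  | refl => rfl
  | tail _ hadj ih => exact ih.trans (hf hadj)

lemma Reachable.of_forall_adj_reachable (hHG : ∀ ⦃a b⦄, H.Adj a b → G.Reachable a b)
    {u v : V} (h : H.Reachable u v) : G.Reachable u v :=
  ConnectedComponent.exact <|
    h.apply_eq_of_adj fun _ _ hab => ConnectedComponent.sound (hHG hab)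

lemma card_connectedComponent_congr (h : ∀ u v, G.Reachable u v ↔ H.Reachable u v) :
    Nat.card G.ConnectedComponent = Nat.card H.ConnectedComponent :=
  Nat.card_congr (Quot.congr (Equiv.refl V) h)

lemma card_connectedComponent_bot [Fintype V] :
    Nat.card (⊥ : SimpleGraph V).ConnectedComponent = Fintype.card V := by
  rw [← Nat.card_eq_fintype_card]
  exact Nat.card_congr (Equiv.ofBijective _
    ⟨fun u v h => reachable_bot.1 (ConnectedComponent.exact h), fun C => C.exists_rep⟩).symm

lemma card_connectedComponent_sup_edge_of_reachable {p q : V} (h : G.Reachable p q) :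
    Nat.card (G ⊔ edge p q).ConnectedComponent = Nat.card G.ConnectedComponent := by
  refine card_connectedComponent_congr fun u v =>
    ⟨fun huv => huv.of_forall_adj_reachable fun a b hab => ?_, fun huv => huv.mono le_sup_left⟩
  rcases hab with hab | hab
  · exact hab.reachable
  · obtain ⟨⟨rfl, rfl⟩ | ⟨rfl, rfl⟩, -⟩ := (edge_adj ..).1 hab
    exacts [h, h.symm]

lemma card_connectedComponent_sup_edge_add_one [Finite V] {p q : V} (h : ¬G.Reachable p q) :
    Nat.card (G ⊔ edge p q).ConnectedComponent + 1 = Nat.card G.ConnectedComponent := by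
  classical
  have hpq : G.connectedComponentMk p ≠ G.connectedComponentMk q :=
    fun h' => h (ConnectedComponent.exact h')
  have hadj : (G ⊔ edge p q).Adj p q :=
    Or.inr ((edge_adj ..).2 ⟨Or.inl ⟨rfl, rfl⟩, fun h' => h (h' ▸ Reachable.refl p)⟩)
  -- `merge` collapses the component of `q` onto that of `p`, as the new edge does
  let merge (v : V) : G.ConnectedComponent :=
    if G.connectedComponentMk v = G.connectedComponentMk q then G.connectedComponentMk p
    else G.connectedComponentMk v
  have hmerge : ∀ ⦃u v⦄, (G ⊔ edge p q).Reachable u v → merge u = merge v := by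
    refine fun u v huv => huv.apply_eq_of_adj fun a b hab => ?_
    rcases hab with hab | hab
    · simp only [merge, ConnectedComponent.sound hab.reachable]
    · obtain ⟨⟨rfl, rfl⟩ | ⟨rfl, rfl⟩, -⟩ := (edge_adj ..).1 hab <;> simp [merge]
  refine (Nat.card_eq_card_add_one_of_injOn_compl
    (ConnectedComponent.surjective_map_ofLE le_sup_left) hpq
    (ConnectedComponent.sound hadj.reachable) ?_).symm
  intro C hC D hD hCD
  induction C using ConnectedComponent.ind with | h u => ?_
  induction D using ConnectedComponent.ind with | h v => ?_
  have hu : G.connectedComponentMk u ≠ G.connectedComponentMk q := hC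
  have hv : G.connectedComponentMk v ≠ G.connectedComponentMk q := hD
  simpa only [merge, hu, hv, if_false] using
    hmerge (u := u) (v := v) (ConnectedComponent.exact hCD)

end SimpleGraph

section Connectivity

variable {V E : Type} {ends : E → Sym2 V} {S T : Finset E} {f : E}

def Spans (ends : E → Sym2 V) (S : Finset E) (f : E) : Prop :=
  ∀ p q, ends f = s(p, q) → (edgeGraph ends S).Reachable p q

lemma spans_iff_reachable {p q : V} (hf : ends f = s(p, q)) :
    Spans ends S f ↔ (edgeGraph ends S).Reachable p q := by
  refine ⟨fun h => h p q hf, fun h p' q' hf' => ?_⟩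
  rcases Sym2.eq_iff.1 (hf.symm.trans hf') with ⟨rfl, rfl⟩ | ⟨rfl, rfl⟩
  exacts [h, h.symm]

lemma edgeGraph_mono (h : S ⊆ T) : edgeGraph ends S ≤ edgeGraph ends T := by
  rintro a b ⟨hab, e, he, hs⟩
  exact ⟨hab, e, h he, hs⟩

lemma Spans.mono (h : S ⊆ T) (hf : Spans ends S f) : Spans ends T f :=
  fun p q hpq => (hf p q hpq).mono (edgeGraph_mono h)

lemma spans_of_mem (hf : f ∈ S) : Spans ends S f := by
  intro p q hpq
  by_cases h : p = q
  · exact h ▸ SimpleGraph.Reachable.refl p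
  · exact SimpleGraph.Adj.reachable ⟨h, f, hf, hpq⟩

lemma reachable_of_forall_spans (h : ∀ g ∈ S, Spans ends T g) {u v : V}
    (huv : (edgeGraph ends S).Reachable u v) : (edgeGraph ends T).Reachable u v :=
  huv.of_forall_adj_reachable <| by
    rintro a b ⟨-, g, hg, hs⟩
    exact h g hg a b hs

lemma Spans.trans (h : ∀ g ∈ S, Spans ends T g) (hf : Spans ends S f) : Spans ends T f :=
  fun p q hpq => reachable_of_forall_spans h (hf p q hpq)

lemma kc_congr
    (h : ∀ u v, (edgeGraph ends S).Reachable u v ↔ (edgeGraph ends T).Reachable u v) :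
    kc ends S = kc ends T :=
  SimpleGraph.card_connectedComponent_congr h

lemma kc_empty [Fintype V] : kc ends ∅ = Fintype.card V := by
  have : edgeGraph ends ∅ = ⊥ := by
    ext a b
    simp [edgeGraph]
  rw [kc, this, SimpleGraph.card_connectedComponent_bot]

variable [DecidableEq E]

lemma edgeGraph_insert {p q : V} (hf : ends f = s(p, q)) :
    edgeGraph ends (insert f S) = edgeGraph ends S ⊔ SimpleGraph.edge p q := by
  ext a b
  simp only [edgeGraph, SimpleGraph.sup_adj, SimpleGraph.edge_adj, Finset.exists_mem_insert, hf,
    Sym2.eq_iff]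
  grind

lemma kc_insert_of_spans (h : Spans ends S f) : kc ends (insert f S) = kc ends S := by
  obtain ⟨⟨p, q⟩, hf⟩ := Quot.exists_rep (ends f)
  rw [kc, edgeGraph_insert hf.symm]
  exact SimpleGraph.card_connectedComponent_sup_edge_of_reachable
    ((spans_iff_reachable hf.symm).1 h)

lemma kc_insert_add_one [Finite V] (h : ¬Spans ends S f) :
    kc ends (insert f S) + 1 = kc ends S := by
  obtain ⟨⟨p, q⟩, hf⟩ := Quot.exists_rep (ends f)
  rw [kc, edgeGraph_insert hf.symm]
  exact SimpleGraph.card_connectedComponent_sup_edge_add_one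
    ((spans_iff_reachable hf.symm).not.1 h)

end Connectivity

section Forest

variable {V E : Type} [Fintype V] [DecidableEq E] {ends : E → Sym2 V} {S : Finset E} {f : E}

def IsForest (ends : E → Sym2 V) (S : Finset E) : Prop :=
  S.card + kc ends S = Fintype.card V

lemma card_add_kc_le_insert (S : Finset E) (f : E) :
    S.card + kc ends S ≤ (insert f S).card + kc ends (insert f S) := by
  by_cases hfS : f ∈ S
  · rw [Finset.insert_eq_of_mem hfS]
  rw [Finset.card_insert_of_notMem hfS]
  by_cases hf : Spans ends S f
  · rw [kc_insert_of_spans hf]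
    omega
  · have := kc_insert_add_one hf
    omega

lemma card_le_card_add_kc (S : Finset E) : Fintype.card V ≤ S.card + kc ends S := by
  induction S using Finset.induction with
  | empty => simp [kc_empty]
  | insert f S _ ih => exact ih.trans (card_add_kc_le_insert S f)

lemma IsForest.insert (hS : IsForest ends S) (hf : ¬Spans ends S f) :
    IsForest ends (insert f S) := by
  have hfS : f ∉ S := fun h => hf (spans_of_mem h)
  have := kc_insert_add_one hf
  unfold IsForest at *
  rw [Finset.card_insert_of_notMem hfS]
  omega

lemma IsForest.not_spans_erase (hS : IsForest ends S) {g : E} (hg : g ∈ S) :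
    ¬Spans ends (S.erase g) g := by
  intro h
  have hkc := kc_insert_of_spans h
  rw [Finset.insert_erase hg] at hkc
  have := card_le_card_add_kc (ends := ends) (S.erase g)
  have := Finset.card_erase_add_one hg
  unfold IsForest at hS
  omega

lemma IsForest.kc_erase (hS : IsForest ends S) {g : E} (hg : g ∈ S) :
    kc ends (S.erase g) = kc ends S + 1 := by
  have := kc_insert_add_one (hS.not_spans_erase hg)
  rw [Finset.insert_erase hg] at this
  omega

end Forest

section Activity

variable {V E : Type} [Fintype V] [Fintype E] {ends : E → Sym2 V} {B B' : Finset E} {e f : E}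

lemma IsSpanningForest.card_eq (hB : IsSpanningForest ends B)
    (hB' : IsSpanningForest ends B') : B.card = B'.card := by
  unfold IsSpanningForest at hB hB'
  omega

variable [DecidableEq E]

lemma IsSpanningForest.swapEdge_iff (hB : IsSpanningForest ends B) (he : e ∈ B) (hf : f ∉ B) :
    IsSpanningForest ends (swapEdge B e f) ↔ ¬Spans ends (B.erase e) f := by
  have hcard : (swapEdge B e f).card = B.card := by
    rw [swapEdge, Finset.card_insert_of_notMem (fun h => hf (Finset.mem_of_mem_erase h)),
      Finset.card_erase_add_one he]
  have hkc := (show IsForest ends B from hB.1).kc_erase he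
  obtain ⟨hforest, hspan⟩ := hB
  unfold IsSpanningForest
  rw [hcard]
  by_cases h : Spans ends (B.erase e) f
  · rw [swapEdge, kc_insert_of_spans h]
    simp only [h, not_true_eq_false, iff_false]
    omega
  · have := kc_insert_add_one h
    rw [← swapEdge] at this
    simp only [h, not_false_eq_true, iff_true]
    omega

variable [LinearOrder E]

lemma internallyActive_iff (hB : IsSpanningForest ends B) (he : e ∈ B) :
    InternallyActive ends B e ↔ ∀ f ∉ B, e < f → Spans ends (B.erase e) f := by
  simp only [InternallyActive, he, true_and, not_exists, not_and]
  refine forall_congr' fun f => forall_congr' fun hf => forall_congr' fun _ => ?_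
  rw [hB.swapEdge_iff he hf, not_not]

lemma externallyActive_iff (hB : IsSpanningForest ends B) (hf : f ∉ B) :
    ExternallyActive ends B f ↔ ∀ e ∈ B, f < e → Spans ends (B.erase e) f := by
  simp only [ExternallyActive, hf, not_false_eq_true, true_and, not_exists, not_and]
  refine forall_congr' fun e => forall_congr' fun he => forall_congr' fun _ => ?_
  rw [hB.swapEdge_iff he hf, not_not]

lemma intAct_subset : intAct ends B ⊆ B := fun _ h => (Finset.mem_filter.1 h).2.1

lemma disjoint_extAct : Disjoint (extAct ends B) B :=
  Finset.disjoint_left.2 fun _ h => (Finset.mem_filter.1 h).2.1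

end Activity

section Greedy

variable {V E α : Type} [Fintype E] [LinearOrder α] {ends : E → Sym2 V} {w : E → α}
  {S T : Finset E} {e f : E}

noncomputable def below (w : E → α) (e : E) : Finset E := Finset.univ.filter fun f => w f < w e

lemma mem_below : f ∈ below w e ↔ w f < w e := by simp [below]

lemma below_subset_below (he : e ∈ below w f) : below w e ⊆ below w f :=
  fun _ hg => mem_below.2 ((mem_below.1 hg).trans (mem_below.1 he))

noncomputable def greedyForest (ends : E → Sym2 V) (w : E → α) : Finset E :=
  Finset.univ.filter fun e => ¬Spans ends (below w e) e

lemma mem_greedyForest : e ∈ greedyForest ends w ↔ ¬Spans ends (below w e) e := by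
  simp [greedyForest]

variable [DecidableEq E]

lemma spans_inter_greedyForest (hS : ∀ e ∈ S, below w e ⊆ S) :
    ∀ g ∈ S, Spans ends (S ∩ greedyForest ends w) g := by
  induction S using Finset.strongInduction with
  | H S ih =>
  intro g hg
  by_cases hgr : g ∈ greedyForest ends w
  · exact spans_of_mem (Finset.mem_inter.2 ⟨hg, hgr⟩)
  have hsub : below w g ⊂ S :=
    (Finset.ssubset_iff_of_subset (hS g hg)).2 ⟨g, hg, fun h => lt_irrefl _ (mem_below.1 h)⟩
  refine (Spans.trans (ih _ hsub fun _ => below_subset_below)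
    (not_not.1 (mem_greedyForest.not.1 hgr))).mono ?_
  exact Finset.inter_subset_inter_right hsub.subset

lemma kc_inter_greedyForest (hS : ∀ e ∈ S, below w e ⊆ S) :
    kc ends (S ∩ greedyForest ends w) = kc ends S :=
  kc_congr fun _ _ => ⟨fun h => h.mono (edgeGraph_mono Finset.inter_subset_left),
    reachable_of_forall_spans (spans_inter_greedyForest hS)⟩

lemma spans_greedyForest_erase (hf : f ∉ greedyForest ends w) (he : ¬w e < w f) :
    Spans ends ((greedyForest ends w).erase e) f := by
  refine (Spans.trans (spans_inter_greedyForest fun _ => below_subset_below)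
    (not_not.1 (mem_greedyForest.not.1 hf))).mono ?_
  intro g hg
  obtain ⟨hgb, hgg⟩ := Finset.mem_inter.1 hg
  exact Finset.mem_erase.2 ⟨fun h => he (h ▸ mem_below.1 hgb), hgg⟩

variable [Fintype V]

lemma isForest_of_subset_greedyForest (hw : Function.Injective w)
    (hT : T ⊆ greedyForest ends w) :
    IsForest ends T := by
  induction T using Finset.strongInduction with
  | H T ih =>
  rcases T.eq_empty_or_nonempty with rfl | hne
  · simp [IsForest, kc_empty]
  obtain ⟨e, he, hmax⟩ := Finset.exists_max_image T w hne
  have hbelow : T.erase e ⊆ below w e := fun g hg => mem_below.2 <|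
    (hmax g (Finset.mem_of_mem_erase hg)).lt_of_ne (hw.ne (Finset.ne_of_mem_erase hg))
  have hforest := ih _ (Finset.erase_ssubset he) ((Finset.erase_subset e T).trans hT)
  have := hforest.insert fun h => mem_greedyForest.1 (hT he) (h.mono hbelow)
  rwa [Finset.insert_erase he] at this

lemma greedyForest_isSpanningForest (hw : Function.Injective w) :
    IsSpanningForest ends (greedyForest ends w) := by
  refine ⟨isForest_of_subset_greedyForest hw subset_rfl, ?_⟩
  simpa using kc_inter_greedyForest (ends := ends) (w := w) (S := Finset.univ)
    fun _ _ => Finset.subset_univ _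

end Greedy

section CanonicalForest

variable {V E : Type} [LinearOrder E] {A : Finset E} {e f : E}

noncomputable def activityKey (A : Finset E) (e : E) : E ⊕ₗ Eᵒᵈ :=
  toLex (if e ∈ A then Sum.inl e else Sum.inr (OrderDual.toDual e))

lemma activityKey_lt_activityKey_iff :
    activityKey A f < activityKey A e ↔
      f ∈ A ∧ e ∉ A ∨ f ∈ A ∧ e ∈ A ∧ f < e ∨ f ∉ A ∧ e ∉ A ∧ e < f := by
  unfold activityKey
  split_ifs <;> simp_all

lemma activityKey_injective (A : Finset E) : Function.Injective (activityKey A) := by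
  intro f e h
  unfold activityKey at h
  split_ifs at h <;> simp_all

variable [Fintype E]

lemma below_activityKey_subset (he : e ∈ A) : below (activityKey A) e ⊆ A := fun f hf => by
  have := activityKey_lt_activityKey_iff.1 (mem_below.1 hf)
  tauto

variable [DecidableEq E] {ends : E → Sym2 V}

noncomputable def canonicalForest (ends : E → Sym2 V) (A : Finset E) : Finset E :=
  greedyForest ends (activityKey A)

variable [Fintype V]

lemma canonicalForest_isSpanningForest (A : Finset E) :
    IsSpanningForest ends (canonicalForest ends A) :=
  greedyForest_isSpanningForest (activityKey_injective A)

lemma kc_add_card_inter_canonicalForest (A : Finset E) :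
    kc ends A + (A ∩ canonicalForest ends A).card = Fintype.card V := by
  have hforest : IsForest ends (A ∩ canonicalForest ends A) :=
    isForest_of_subset_greedyForest (activityKey_injective A) Finset.inter_subset_right
  have hkc : kc ends (A ∩ canonicalForest ends A) = kc ends A :=
    kc_inter_greedyForest fun _ => below_activityKey_subset
  unfold IsForest at hforest
  omega

lemma kc_sub_kc_univ_eq_card (A : Finset E) :
    kc ends A - kc ends Finset.univ = (canonicalForest ends A \ A).card := by
  obtain ⟨hforest, hspan⟩ := canonicalForest_isSpanningForest (ends := ends) A
  have := kc_add_card_inter_canonicalForest (ends := ends) A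
  have := Finset.card_sdiff_add_card_inter (canonicalForest ends A) A
  rw [Finset.inter_comm] at this
  omega

lemma card_add_kc_sub_card_eq_card (A : Finset E) :
    A.card + kc ends A - Fintype.card V = (A \ canonicalForest ends A).card := by
  have := kc_add_card_inter_canonicalForest (ends := ends) A
  have := Finset.card_sdiff_add_card_inter A (canonicalForest ends A)
  omega

end CanonicalForest

section Fibres

variable {V E : Type} [Fintype V] [Fintype E] [DecidableEq E] [LinearOrder E]
  {ends : E → Sym2 V} {A B : Finset E}

lemma canonicalForest_sdiff_subset_intAct (A : Finset E) :
    canonicalForest ends A \ A ⊆ intAct ends (canonicalForest ends A) := by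
  intro e he
  obtain ⟨heF, heA⟩ := Finset.mem_sdiff.1 he
  refine Finset.mem_filter.2 ⟨Finset.mem_univ e, ?_⟩
  refine (internallyActive_iff (canonicalForest_isSpanningForest A) heF).2 fun f hf hef => ?_
  refine spans_greedyForest_erase hf ?_
  rw [activityKey_lt_activityKey_iff]
  have := hef.not_gt
  tauto

lemma sdiff_canonicalForest_subset_extAct (A : Finset E) :
    A \ canonicalForest ends A ⊆ extAct ends (canonicalForest ends A) := by
  intro f hf
  obtain ⟨hfA, hfF⟩ := Finset.mem_sdiff.1 hf
  refine Finset.mem_filter.2 ⟨Finset.mem_univ f, ?_⟩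
  refine (externallyActive_iff (canonicalForest_isSpanningForest A) hfF).2 fun e _ hfe => ?_
  refine spans_greedyForest_erase hfF ?_
  rw [activityKey_lt_activityKey_iff]
  have := hfe.not_gt
  tauto

lemma spans_erase_of_activityKey_lt (hB : IsSpanningForest ends B)
    (hI : B \ A ⊆ intAct ends B) (hX : A \ B ⊆ extAct ends B) {e g : E} (he : e ∈ B)
    (hg : g ∉ B) (hlt : activityKey A g < activityKey A e) : Spans ends (B.erase e) g := by
  have hext (hgA : g ∈ A) : ∀ e ∈ B, g < e → Spans ends (B.erase e) g :=
    (externallyActive_iff hB hg).1 (Finset.mem_filter.1 (hX (Finset.mem_sdiff.2 ⟨hgA, hg⟩))).2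
  have hint (heA : e ∉ A) : ∀ f ∉ B, e < f → Spans ends (B.erase e) f :=
    (internallyActive_iff hB he).1 (Finset.mem_filter.1 (hI (Finset.mem_sdiff.2 ⟨he, heA⟩))).2
  rcases activityKey_lt_activityKey_iff.1 hlt with
    ⟨hgA, heA⟩ | ⟨hgA, -, hge⟩ | ⟨-, heA, heg⟩
  · rcases (show g ≠ e from fun h => hg (h ▸ he)).lt_or_gt with hge | heg
    · exact hext hgA e he hge
    · exact hint heA g hg heg
  · exact hext hgA e he hge
  · exact hint heA g hg heg

lemma canonicalForest_eq_of_subset (hB : IsSpanningForest ends B)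
    (hI : B \ A ⊆ intAct ends B) (hX : A \ B ⊆ extAct ends B) : canonicalForest ends A = B := by
  refine (Finset.eq_of_subset_of_card_le (fun e he => ?_)
    ((canonicalForest_isSpanningForest A).card_eq hB).le).symm
  refine mem_greedyForest.2 fun hspan => (show IsForest ends B from hB.1).not_spans_erase he ?_
  refine hspan.trans fun g hg => ?_
  by_cases hgB : g ∈ B
  · exact spans_of_mem (Finset.mem_erase.2 ⟨fun h => lt_irrefl _ (h ▸ mem_below.1 hg), hgB⟩)
  · exact spans_erase_of_activityKey_lt hB hI hX he hgB (mem_below.1 hg)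

lemma canonicalForest_eq_iff (hB : IsSpanningForest ends B) :
    canonicalForest ends A = B ↔ B \ A ⊆ intAct ends B ∧ A \ B ⊆ extAct ends B := by
  refine ⟨?_, fun h => canonicalForest_eq_of_subset hB h.1 h.2⟩
  rintro rfl
  exact ⟨canonicalForest_sdiff_subset_intAct A, sdiff_canonicalForest_subset_extAct A⟩

lemma sum_fibre_canonicalForest {R : Type} [CommSemiring R] (hB : IsSpanningForest ends B)
    (a b : R) :
    ∑ A ∈ Finset.univ.powerset.filter (fun A => canonicalForest ends A = B),
        a ^ (canonicalForest ends A \ A).card * b ^ (A \ canonicalForest ends A).card =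
      (a + 1) ^ (intAct ends B).card * (b + 1) ^ (extAct ends B).card := by
  rw [← sum_pow_card_sdiff_mul_pow_card_sdiff intAct_subset disjoint_extAct]
  refine Finset.sum_congr (Finset.filter_congr fun A _ => canonicalForest_eq_iff hB)
    fun A hA => ?_
  obtain ⟨-, hI, hX⟩ := Finset.mem_filter.1 hA
  rw [canonicalForest_eq_of_subset hB hI hX]

end Fibres

/-- The Tutte polynomial (spanning-forest expansion with activities)
equals the edge-subset (Whitney rank) expansion. -/
theorem tutte_edge_subset_expansion {V E : Type} [Fintype V] [Fintype E] [DecidableEq E]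
    [LinearOrder E] (ends : E → Sym2 V) (x y : ℝ) :
    ∑ F ∈ Finset.univ.powerset.filter (IsSpanningForest ends),
        x ^ (intAct ends F).card * y ^ (extAct ends F).card =
      ∑ A ∈ (Finset.univ : Finset E).powerset,
        (x - 1) ^ (kc ends A - kc ends Finset.univ) *
          (y - 1) ^ (A.card + kc ends A - Fintype.card V) := by
  calc _ = ∑ B ∈ Finset.univ.powerset.filter (IsSpanningForest ends),
        ∑ A ∈ Finset.univ.powerset.filter (fun A => canonicalForest ends A = B),
          (x - 1) ^ (canonicalForest ends A \ A).card *
            (y - 1) ^ (A \ canonicalForest ends A).card :=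
        Finset.sum_congr rfl fun B hB => by
          rw [sum_fibre_canonicalForest (Finset.mem_filter.1 hB).2, sub_add_cancel, sub_add_cancel]
    _ = ∑ A ∈ (Finset.univ : Finset E).powerset,
        (x - 1) ^ (canonicalForest ends A \ A).card *
          (y - 1) ^ (A \ canonicalForest ends A).card :=
        Finset.sum_fiberwise_of_maps_to (fun A _ => Finset.mem_filter.2
          ⟨Finset.mem_powerset.2 (Finset.subset_univ _), canonicalForest_isSpanningForest A⟩) _
    _ = _ := by
      simp only [kc_sub_kc_univ_eq_card, card_add_kc_sub_card_eq_card]
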